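/- Let S be symmetric positive definite (m×m), ν ∈ ℝ^m nonzero, A ∈ ℝ^{q×n} full row rank, P symmetric PSD, H ∈ ℝ^{m×n}, with unconstrained gain K = P Hᵀ S⁻¹ and unconstrained update x̂_u = x̂ + K ν. Then the constrained gain K^R = K - Aᵀ(AAᵀ)⁻¹(A x̂_u - b)(νᵀS⁻¹ν)⁻¹ νᵀS⁻¹ satisfies A(x̂ + K^R ν) = b. -/

import Mathlib

/-!
The factor `(νᵀS⁻¹ν)⁻¹ νᵀS⁻¹` maps `ν` to `1` (`S⁻¹` is positive definite and `ν ≠ 0`), so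
`x̂ + K^R ν = x̂_u - Aᵀ(AAᵀ)⁻¹(A x̂_u - b)`: the constrained update is the orthogonal projection of
`x̂_u` onto the affine subspace `A x = b`, which exists because `AAᵀ` is invertible when `A` has full
row rank.
-/

open Matrix

namespace Matrix

variable {𝕜 l m n : Type*} [Field 𝕜] [Fintype m] [DecidableEq m]

theorem isUnit_of_rank_eq_card (M : Matrix m m 𝕜) (h : M.rank = Fintype.card m) :
    IsUnit M := by
  rw [← mulVec_surjective_iff_isUnit, ← coe_mulVecLin, ← LinearMap.range_eq_top]
  apply Submodule.eq_top_of_finrank_eq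
  rw [← rank, h, Module.finrank_fintype_fun_eq_card]

theorem isUnit_mul_transpose_of_rank_eq_card [LinearOrder 𝕜] [IsStrictOrderedRing 𝕜] [Fintype n]
    (A : Matrix m n 𝕜) (hA : A.rank = Fintype.card m) : IsUnit (A * Aᵀ) :=
  isUnit_of_rank_eq_card _ (by rw [rank_self_mul_transpose, hA])

theorem mulVec_sub_transpose_mul_inv_mulVec [Fintype n] (A : Matrix m n 𝕜)
    (hA : IsUnit (A * Aᵀ)) (y : n → 𝕜) (b : m → 𝕜) :
    A *ᵥ (y - (Aᵀ * (A * Aᵀ)⁻¹) *ᵥ (A *ᵥ y - b)) = b := by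
  have hright : A * (Aᵀ * (A * Aᵀ)⁻¹) = 1 := by
    rw [← Matrix.mul_assoc, mul_nonsing_inv _ ((isUnit_iff_isUnit_det _).mp hA)]
  rw [mulVec_sub, mulVec_mulVec, hright, one_mulVec, sub_sub_cancel]

theorem sub_smul_vecMulVec_mulVec [Fintype l] (M : Matrix n l 𝕜) (d : n → 𝕜) (w v : l → 𝕜)
    (hwv : w ⬝ᵥ v ≠ 0) : (M - (w ⬝ᵥ v)⁻¹ • vecMulVec d w) *ᵥ v = M *ᵥ v - d := by
  rw [sub_mulVec, smul_mulVec, vecMulVec_mulVec, op_smul_eq_smul, smul_smul,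
    inv_mul_cancel₀ hwv, one_smul]

end Matrix

theorem stmt9_general {n m q : ℕ}
    (S : Matrix (Fin m) (Fin m) ℝ) (hS : S.PosDef)
    (ν : Fin m → ℝ) (hν : ν ≠ 0)
    (A : Matrix (Fin q) (Fin n) ℝ) (hA : A.rank = q)
    (b : Fin q → ℝ) (xhat : Fin n → ℝ)
    (K : Matrix (Fin n) (Fin m) ℝ)
    (xhatu : Fin n → ℝ) (hxu : xhatu = xhat + K.mulVec ν)
    (KR : Matrix (Fin n) (Fin m) ℝ)
    (hKR : KR = K - (ν ⬝ᵥ S⁻¹.mulVec ν)⁻¹ •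
      vecMulVec ((Aᵀ * (A * Aᵀ)⁻¹).mulVec (A.mulVec xhatu - b)) (vecMul ν S⁻¹)) :
    A.mulVec (xhat + KR.mulVec ν) = b := by
  have hAAt : IsUnit (A * Aᵀ) :=
    isUnit_mul_transpose_of_rank_eq_card A (by rw [hA, Fintype.card_fin])
  have hquad : vecMul ν S⁻¹ ⬝ᵥ ν ≠ 0 := by
    rw [← dotProduct_mulVec]
    simpa using (hS.inv.dotProduct_mulVec_pos hν).ne'
  have hupdate : xhat + KR *ᵥ ν = xhatu - (Aᵀ * (A * Aᵀ)⁻¹) *ᵥ (A *ᵥ xhatu - b) := by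
    rw [hKR, dotProduct_mulVec, sub_smul_vecMulVec_mulVec _ _ _ _ hquad, hxu, add_sub_assoc]
  rw [hupdate, mulVec_sub_transpose_mul_inv_mulVec A hAAt]

/-- The restricted gain `K^R = K - Aᵀ(AAᵀ)⁻¹(A x̂_u - b)(νᵀS⁻¹ν)⁻¹νᵀS⁻¹` yields a
constrained update: `A(x̂ + K^R ν) = b`. -/
theorem stmt9 {n m q : ℕ} (P : Matrix (Fin n) (Fin n) ℝ) (hP : P.PosSemidef)
    (H : Matrix (Fin m) (Fin n) ℝ)
    (S : Matrix (Fin m) (Fin m) ℝ) (hS : S.PosDef)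
    (ν : Fin m → ℝ) (hν : ν ≠ 0)
    (A : Matrix (Fin q) (Fin n) ℝ) (hA : A.rank = q)
    (b : Fin q → ℝ) (xhat : Fin n → ℝ)
    (K : Matrix (Fin n) (Fin m) ℝ) (hK : K = P * Hᵀ * S⁻¹)
    (xhatu : Fin n → ℝ) (hxu : xhatu = xhat + K.mulVec ν)
    (KR : Matrix (Fin n) (Fin m) ℝ)
    (hKR : KR = K - (ν ⬝ᵥ S⁻¹.mulVec ν)⁻¹ •
      vecMulVec ((Aᵀ * (A * Aᵀ)⁻¹).mulVec (A.mulVec xhatu - b)) (vecMul ν S⁻¹)) :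
    A.mulVec (xhat + KR.mulVec ν) = b :=
  stmt9_general S hS ν hν A hA b xhat K xhatu hxu KR hKR
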